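/- Let 𝕋 be a combinatorial tree forcing that has the selective disjoint antichain property. Then the cofinality of the cardinal cof(t⁰) is strictly greater than 𝔠, i.e. cf(cof(t⁰)) > 2^{ℵ₀}. -/

import Mathlib

/-- The restriction `x↾n` of a sequence `x ∈ ω^ω` to its first `n` values, as a finite sequence. -/
def seqRestrict (x : ℕ → ℕ) (n : ℕ) : List ℕ := List.ofFn fun i : Fin n => x i

/-- A tree on `ω`: a nonempty set of finite sequences closed under initial segments. -/
def IsSeqTree (T : Set (List ℕ)) : Prop :=
  T.Nonempty ∧ ∀ s ∈ T, ∀ t : List ℕ, t <+: s → t ∈ T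

/-- `[T]`, the set of branches of a tree `T ⊆ ω^{<ω}`. -/
def branches (T : Set (List ℕ)) : Set (ℕ → ℕ) := {x | ∀ n : ℕ, seqRestrict x n ∈ T}

/-- `S` and `T` are compatible in `𝕋` (ordered by inclusion) if they have a common extension. -/
def Compat (𝕋 : Set (Set (List ℕ))) (S T : Set (List ℕ)) : Prop :=
  ∃ R ∈ 𝕋, R ⊆ S ∧ R ⊆ T

/-- A combinatorial tree forcing: a collection `𝕋` of trees on `ω` containing the full tree,
closed under restrictions `T_s`, with large disjoint antichains, and homogeneous. -/
structure CombTreeForcing (𝕋 : Set (Set (List ℕ))) : Prop where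
  /-- every member of `𝕋` is a tree -/
  isTree : ∀ T ∈ 𝕋, IsSeqTree T
  /-- (1) `ω^{<ω} ∈ 𝕋` -/
  univ_mem : (Set.univ : Set (List ℕ)) ∈ 𝕋
  /-- (2) closure under subtrees `T_s` -/
  restrict_mem : ∀ T ∈ 𝕋, ∀ s ∈ T, {t ∈ T | s <+: t ∨ t <+: s} ∈ 𝕋
  /-- (3) large disjoint antichains: a continuous `f : ω^ω → 2^ω` all of whose fibers are
  branch sets of trees in `𝕋` -/
  large_disjoint : ∃ f : (ℕ → ℕ) → (ℕ → Bool), Continuous f ∧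
      ∀ x : ℕ → Bool, ∃ T ∈ 𝕋, f ⁻¹' {x} = branches T
  /-- (4) homogeneity: below every `T ∈ 𝕋` there is an order-preserving injective copy
  `i : ω^{<ω} → T` of the full tree inducing a homeomorphism `g : ω^ω → [T]`,
  `g(x) = ⋃_n i(x↾n)`, such that `S ∈ 𝕋` iff the downward closure of `i''S` is in `𝕋`. -/
  homogeneity : ∀ T ∈ 𝕋, ∃ i : List ℕ → List ℕ,
      Function.Injective i ∧ (∀ s t : List ℕ, s <+: t → i s <+: i t) ∧
      (∀ s : List ℕ, i s ∈ T) ∧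
      ∃ g : (ℕ → ℕ) → (ℕ → ℕ),
        (∀ (x : ℕ → ℕ) (n : ℕ),
          i (seqRestrict x n) = seqRestrict (g x) (i (seqRestrict x n)).length) ∧
        Topology.IsEmbedding g ∧ Set.range g = branches T ∧
        ∀ S : Set (List ℕ), IsSeqTree S → (S ∈ 𝕋 ↔ {t | ∃ s ∈ S, t <+: i s} ∈ 𝕋)

/-- `𝕋` has the selective disjoint antichain property: there is an antichain `(T_α : α < 𝔠)`
with pairwise disjoint branch sets such that below every `T ∈ 𝕋` there is `S ∈ 𝕋` which
either lies below some `T_α`, or satisfies `|[S] ∩ [T_α]| ≤ 1` for all `α`. -/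
def SelectiveDisjointAntichainProp (𝕋 : Set (Set (List ℕ))) : Prop :=
  ∃ (ι : Type) (Tfam : ι → Set (List ℕ)),
    Cardinal.mk ι = Cardinal.continuum ∧
    (∀ a : ι, Tfam a ∈ 𝕋) ∧
    (∀ a b : ι, a ≠ b → ¬ Compat 𝕋 (Tfam a) (Tfam b)) ∧
    (∀ a b : ι, a ≠ b → branches (Tfam a) ∩ branches (Tfam b) = ∅) ∧
    ∀ T ∈ 𝕋, ∃ S ∈ 𝕋, S ⊆ T ∧
      ((∃ a : ι, S ⊆ Tfam a) ∨ ∀ a : ι, (branches S ∩ branches (Tfam a)).Subsingleton)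

/-- The tree ideal `t⁰` associated with `𝕋`: all `X ⊆ ω^ω` such that below every `T ∈ 𝕋`
there is `S ∈ 𝕋` with `X ∩ [S] = ∅`. -/
def treeIdeal (𝕋 : Set (Set (List ℕ))) : Set (Set (ℕ → ℕ)) :=
  {X | ∀ T ∈ 𝕋, ∃ S ∈ 𝕋, S ⊆ T ∧ X ∩ branches S = ∅}

/-- The cofinality `cof(I)` of an ideal `I`: the least cardinality of a family `J ⊆ I`
such that every member of `I` is contained in a member of `J`. -/
noncomputable def idealCof (I : Set (Set (ℕ → ℕ))) : Cardinal :=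
  sInf {c : Cardinal | ∃ J ⊆ I, Cardinal.mk J = c ∧ ∀ X ∈ I, ∃ Y ∈ J, X ⊆ Y}

/-!
Suppose `cf(cof t⁰) ≤ 𝔠`. Then a cofinal family `J ⊆ t⁰` of size `μ = cof t⁰` is the union of
subfamilies `D_β`, `β < 𝔠`, each of size `< μ`. Index the selective antichain as `(T_β : β < 𝔠)`
and list all trees in order type `𝔠` too. Homogeneity turns `t⁰` below `T_β` into a copy of `t⁰`,
so as `|D_β| < μ` there is `X_β ⊆ [T_β]` which is null below `T_β`, lies in no member of `D_β`,
and avoids the fewer than `𝔠` branches that `[T_β]` shares with the earlier *thin* trees (those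
meeting every `[T_α]` in at most one branch). Now `X = ⋃_β X_β` is in `t⁰`: below a tree inside
`T_b`, `X` reduces to `X_b`, and a thin tree meets `X` in fewer than `𝔠` points, while every set
of size `< 𝔠` is in `t⁰` by the large disjoint antichains. Yet `X` is covered by no member of `J`.
-/
universe u

open Cardinal Set Function Topology

@[simp]
theorem seqRestrict_length (x : ℕ → ℕ) (n : ℕ) : (seqRestrict x n).length = n := by
  simp [seqRestrict]

theorem seqRestrict_prefix (x : ℕ → ℕ) {m n : ℕ} (h : m ≤ n) :
    seqRestrict x m <+: seqRestrict x n := by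
  rw [List.prefix_iff_eq_take]
  apply List.ext_getElem <;> simp [seqRestrict, h]

theorem seqRestrict_eq_of_prefix {x y : ℕ → ℕ} {m n : ℕ}
    (h : seqRestrict x m <+: seqRestrict y n) : seqRestrict x m = seqRestrict y m :=
  have hmn : m ≤ n := by simpa using h.length_le
  (List.prefix_of_prefix_length_le h (seqRestrict_prefix y hmn) (by simp)).eq_of_length (by simp)

theorem apply_eq_of_seqRestrict_eq {x y : ℕ → ℕ} {n k : ℕ}
    (h : seqRestrict x n = seqRestrict y n) (hk : k < n) : x k = y k :=
  congrFun (List.ofFn_inj.1 h) ⟨k, hk⟩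

theorem branches_mono {S T : Set (List ℕ)} (h : S ⊆ T) : branches S ⊆ branches T :=
  fun _ hx n => h (hx n)

@[simp]
theorem branches_univ : branches Set.univ = Set.univ := by
  ext; simp [branches]

theorem isClosed_branches (T : Set (List ℕ)) : IsClosed (branches T) := by
  have : branches T = ⋂ n, (fun x (k : Fin n) => x k) ⁻¹' {v | List.ofFn v ∈ T} := by
    ext; simp [branches, seqRestrict]
  rw [this]
  exact isClosed_iInter fun n => (isClosed_discrete _).preimage (by fun_prop)

theorem mem_of_forall_seqRestrict_eq {C : Set (ℕ → ℕ)} (hC : IsClosed C) {y : ℕ → ℕ}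
    (h : ∀ n, ∃ x ∈ C, seqRestrict x n = seqRestrict y n) : y ∈ C := by
  choose x hxC hx using h
  refine hC.mem_of_tendsto (b := Filter.atTop) (tendsto_pi_nhds.2 fun k => ?_)
    (Filter.Eventually.of_forall hxC)
  rw [nhds_discrete, Filter.tendsto_pure]
  filter_upwards [Filter.eventually_gt_atTop k] with n hn using apply_eq_of_seqRestrict_eq (hx n) hn

def downImage (i : List ℕ → List ℕ) (S : Set (List ℕ)) : Set (List ℕ) :=
  {t | ∃ s ∈ S, t <+: i s}

structure IsHomogeneityWitness (𝕋 : Set (Set (List ℕ))) (A : Set (List ℕ))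
    (i : List ℕ → List ℕ) (g : (ℕ → ℕ) → ℕ → ℕ) : Prop where
  injective : Injective i
  monotone : ∀ s t : List ℕ, s <+: t → i s <+: i t
  mem : ∀ s, i s ∈ A
  seqRestrict_eq : ∀ x n, i (seqRestrict x n) = seqRestrict (g x) (i (seqRestrict x n)).length
  isEmbedding : IsEmbedding g
  range_eq : range g = branches A
  mem_iff : ∀ S, IsSeqTree S → (S ∈ 𝕋 ↔ downImage i S ∈ 𝕋)

namespace CombTreeForcing

variable {𝕋 : Set (Set (List ℕ))} (hctf : CombTreeForcing 𝕋) {A : Set (List ℕ)}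
include hctf

theorem exists_isHomogeneityWitness (hA : A ∈ 𝕋) : ∃ i g, IsHomogeneityWitness 𝕋 A i g := by
  obtain ⟨i, h₁, h₂, h₃, g, h₄, h₅, h₆, h₇⟩ := hctf.homogeneity A hA
  exact ⟨i, g, h₁, h₂, h₃, h₄, h₅, h₆, h₇⟩

theorem branches_nonempty (hA : A ∈ 𝕋) : (branches A).Nonempty := by
  obtain ⟨i, g, h⟩ := hctf.exists_isHomogeneityWitness hA
  exact h.range_eq ▸ range_nonempty g

theorem exists_mem_branches_seqRestrict_eq (hA : A ∈ 𝕋) {t : List ℕ} (ht : t ∈ A) :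
    ∃ x ∈ branches A, seqRestrict x t.length = t := by
  obtain ⟨x, hx⟩ := hctf.branches_nonempty (hctf.restrict_mem A hA t ht)
  refine ⟨x, fun n => (hx n).1, ?_⟩
  rcases (hx t.length).2 with h | h
  exacts [(h.eq_of_length (by simp)).symm, h.eq_of_length (by simp)]

theorem subset_of_branches_subset (hA : A ∈ 𝕋) {B : Set (List ℕ)}
    (h : branches A ⊆ branches B) : A ⊆ B := fun t ht => by
  obtain ⟨x, hx, hxt⟩ := hctf.exists_mem_branches_seqRestrict_eq hA ht
  exact hxt ▸ h hx _

end CombTreeForcing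

namespace IsHomogeneityWitness

variable {𝕋 : Set (Set (List ℕ))} {A : Set (List ℕ)} {i : List ℕ → List ℕ}
  {g : (ℕ → ℕ) → ℕ → ℕ} (h : IsHomogeneityWitness 𝕋 A i g)
include h

theorem le_length (x : ℕ → ℕ) (n : ℕ) : n ≤ (i (seqRestrict x n)).length := by
  induction n with
  | zero => exact Nat.zero_le _
  | succ n ih =>
    have hpre := h.monotone _ _ (seqRestrict_prefix x (n.le_add_right 1))
    have hne : i (seqRestrict x n) ≠ i (seqRestrict x (n + 1)) := fun he => by
      simpa using congrArg List.length (h.injective he)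
    have := lt_of_le_of_ne hpre.length_le fun hl => hne (hpre.eq_of_length hl)
    omega

theorem seqRestrict_prefix_apply (x : ℕ → ℕ) (n : ℕ) :
    seqRestrict (g x) n <+: i (seqRestrict x n) := by
  rw [h.seqRestrict_eq x n]
  exact seqRestrict_prefix _ (h.le_length x n)

theorem downImage_subset (hA : IsSeqTree A) (S : Set (List ℕ)) : downImage i S ⊆ A :=
  fun _ ⟨s, _, hts⟩ => hA.2 _ (h.mem s) _ hts

theorem branches_downImage (hctf : CombTreeForcing 𝕋) {S : Set (List ℕ)} (hS : S ∈ 𝕋) :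
    branches (downImage i S) = g '' branches S := by
  refine Subset.antisymm (fun y hy => ?_) ?_
  · have hclosed : IsClosedEmbedding g := ⟨h.isEmbedding, h.range_eq ▸ isClosed_branches A⟩
    refine mem_of_forall_seqRestrict_eq (hclosed.isClosedMap _ (isClosed_branches S)) fun n => ?_
    obtain ⟨u, hu, hyu⟩ := hy n
    obtain ⟨x, hx, hxu⟩ := hctf.exists_mem_branches_seqRestrict_eq hS hu
    rw [← hxu, h.seqRestrict_eq] at hyu
    exact ⟨g x, mem_image_of_mem g hx, (seqRestrict_eq_of_prefix hyu).symm⟩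
  · rintro _ ⟨x, hx, rfl⟩ n
    exact ⟨seqRestrict x n, hx n, h.seqRestrict_prefix_apply x n⟩

theorem branches_preimage {R : Set (List ℕ)} (hR : IsSeqTree R) :
    branches (i ⁻¹' R) = g ⁻¹' branches R := by
  ext x
  refine ⟨fun hx n => hR.2 _ (hx n) _ (h.seqRestrict_prefix_apply x n), fun hx n => ?_⟩
  rw [mem_preimage, h.seqRestrict_eq]
  exact hx _

theorem downImage_preimage (hctf : CombTreeForcing 𝕋) {R : Set (List ℕ)} (hR : R ∈ 𝕋)
    (hRA : R ⊆ A) : downImage i (i ⁻¹' R) = R := by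
  refine Subset.antisymm (fun t ⟨s, hs, hts⟩ => (hctf.isTree R hR).2 _ hs _ hts) fun t ht => ?_
  obtain ⟨y, hy, hyt⟩ := hctf.exists_mem_branches_seqRestrict_eq hR ht
  obtain ⟨x, rfl⟩ : y ∈ range g := h.range_eq ▸ branches_mono hRA hy
  have hx : x ∈ branches (i ⁻¹' R) := by
    rw [h.branches_preimage (hctf.isTree R hR)]
    exact hy
  have hprefix := h.seqRestrict_prefix_apply x t.length
  rw [hyt] at hprefix
  exact ⟨_, hx t.length, hprefix⟩

theorem preimage_mem (hctf : CombTreeForcing 𝕋) {R : Set (List ℕ)} (hR : R ∈ 𝕋)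
    (hRA : R ⊆ A) : i ⁻¹' R ∈ 𝕋 := by
  have htree : IsSeqTree (i ⁻¹' R) := by
    refine ⟨?_, fun s hs t hts => (hctf.isTree R hR).2 _ hs _ (h.monotone _ _ hts)⟩
    obtain ⟨y, hy⟩ := hctf.branches_nonempty hR
    obtain ⟨x, rfl⟩ : y ∈ range g := h.range_eq ▸ branches_mono hRA hy
    have hx : x ∈ branches (i ⁻¹' R) := by
      rw [h.branches_preimage (hctf.isTree R hR)]
      exact hy
    exact ⟨_, hx 0⟩
  rw [h.mem_iff _ htree, h.downImage_preimage hctf hR hRA]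
  exact hR

end IsHomogeneityWitness

structure IsBranchCopy (𝕋 : Set (Set (List ℕ))) (A : Set (List ℕ)) (g : (ℕ → ℕ) → ℕ → ℕ) :
    Prop where
  injective : Injective g
  image : ∀ S ∈ 𝕋, ∃ R ∈ 𝕋, R ⊆ A ∧ branches R = g '' branches S
  preimage : ∀ R ∈ 𝕋, R ⊆ A → ∃ S ∈ 𝕋, branches R = g '' branches S

theorem IsHomogeneityWitness.isBranchCopy {𝕋 : Set (Set (List ℕ))} {A : Set (List ℕ)}
    {i : List ℕ → List ℕ} {g : (ℕ → ℕ) → ℕ → ℕ} (h : IsHomogeneityWitness 𝕋 A i g)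
    (hctf : CombTreeForcing 𝕋) (hA : A ∈ 𝕋) : IsBranchCopy 𝕋 A g where
  injective := h.isEmbedding.injective
  image S hS := ⟨downImage i S, (h.mem_iff S (hctf.isTree S hS)).1 hS,
    h.downImage_subset (hctf.isTree A hA) S, h.branches_downImage hctf hS⟩
  preimage R hR hRA := ⟨i ⁻¹' R, h.preimage_mem hctf hR hRA, by
    rw [h.branches_preimage (hctf.isTree R hR),
      image_preimage_eq_of_subset (h.range_eq ▸ branches_mono hRA)]⟩

theorem CombTreeForcing.exists_isBranchCopy {𝕋 : Set (Set (List ℕ))} (hctf : CombTreeForcing 𝕋)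
    {A : Set (List ℕ)} (hA : A ∈ 𝕋) : ∃ g, IsBranchCopy 𝕋 A g := by
  obtain ⟨i, g, h⟩ := hctf.exists_isHomogeneityWitness hA
  exact ⟨g, h.isBranchCopy hctf hA⟩

def treeIdealBelow (𝕋 : Set (Set (List ℕ))) (A : Set (List ℕ)) : Set (Set (ℕ → ℕ)) :=
  {X | ∀ T ∈ 𝕋, T ⊆ A → ∃ S ∈ 𝕋, S ⊆ T ∧ X ∩ branches S = ∅}

section TreeIdeal

variable {𝕋 : Set (Set (List ℕ))} {X Y : Set (ℕ → ℕ)}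

theorem mem_treeIdeal_of_subset (hXY : X ⊆ Y) (hY : Y ∈ treeIdeal 𝕋) : X ∈ treeIdeal 𝕋 :=
  fun T hT =>
    let ⟨S, hS, hST, hYS⟩ := hY T hT
    ⟨S, hS, hST, subset_empty_iff.1 (hYS ▸ inter_subset_inter_left _ hXY)⟩

theorem mem_treeIdealBelow_of_subset {A : Set (List ℕ)} (hXY : X ⊆ Y)
    (hY : Y ∈ treeIdealBelow 𝕋 A) : X ∈ treeIdealBelow 𝕋 A :=
  fun T hT hTA =>
    let ⟨S, hS, hST, hYS⟩ := hY T hT hTA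
    ⟨S, hS, hST, subset_empty_iff.1 (hYS ▸ inter_subset_inter_left _ hXY)⟩

theorem union_mem_treeIdeal (hX : X ∈ treeIdeal 𝕋) (hY : Y ∈ treeIdeal 𝕋) :
    X ∪ Y ∈ treeIdeal 𝕋 := fun T hT => by
  obtain ⟨S, hS, hST, hXS⟩ := hX T hT
  obtain ⟨R, hR, hRS, hYR⟩ := hY S hS
  refine ⟨R, hR, hRS.trans hST, ?_⟩
  rw [union_inter_distrib_right, hYR, union_empty]
  exact subset_empty_iff.1 (hXS ▸ inter_subset_inter_right _ (branches_mono hRS))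

end TreeIdeal

theorem idealCof_le {I J : Set (Set (ℕ → ℕ))} (hJI : J ⊆ I) (hJ : ∀ X ∈ I, ∃ Y ∈ J, X ⊆ Y) :
    idealCof I ≤ #J :=
  csInf_le' ⟨J, hJI, rfl, hJ⟩

theorem exists_mk_eq_idealCof (I : Set (Set (ℕ → ℕ))) :
    ∃ J ⊆ I, #J = idealCof I ∧ ∀ X ∈ I, ∃ Y ∈ J, X ⊆ Y :=
  csInf_mem (s := {c | ∃ J ⊆ I, #J = c ∧ ∀ X ∈ I, ∃ Y ∈ J, X ⊆ Y})
    ⟨#I, I, subset_rfl, rfl, fun X hX => ⟨X, hX, subset_rfl⟩⟩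

namespace IsBranchCopy

variable {𝕋 : Set (Set (List ℕ))} {A : Set (List ℕ)} {g : (ℕ → ℕ) → ℕ → ℕ}
  (hg : IsBranchCopy 𝕋 A g) (hctf : CombTreeForcing 𝕋)
include hg hctf

theorem range_subset : range g ⊆ branches A := by
  obtain ⟨R, -, hRA, hR⟩ := hg.image _ hctf.univ_mem
  rw [← image_univ, ← branches_univ, ← hR]
  exact branches_mono hRA

theorem preimage_mem_treeIdeal {Y : Set (ℕ → ℕ)} (hY : Y ∈ treeIdeal 𝕋) :
    g ⁻¹' Y ∈ treeIdeal 𝕋 := by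
  intro T hT
  obtain ⟨R, hR, hRA, hRT⟩ := hg.image T hT
  obtain ⟨R', hR', hR'R, hYR'⟩ := hY R hR
  obtain ⟨S, hS, hR'S⟩ := hg.preimage R' hR' (hR'R.trans hRA)
  refine ⟨S, hS, hctf.subset_of_branches_subset hS ?_, ?_⟩
  · rw [← image_subset_image_iff hg.injective, ← hR'S, ← hRT]
    exact branches_mono hR'R
  · exact eq_empty_iff_forall_notMem.2 fun x ⟨hxY, hxS⟩ =>
      hYR'.subset ⟨hxY, hR'S ▸ mem_image_of_mem g hxS⟩

theorem image_mem_treeIdealBelow {Z : Set (ℕ → ℕ)} (hZ : Z ∈ treeIdeal 𝕋) :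
    g '' Z ∈ treeIdealBelow 𝕋 A := by
  intro T hT hTA
  obtain ⟨S, hS, hTS⟩ := hg.preimage T hT hTA
  obtain ⟨S', hS', hS'S, hZS'⟩ := hZ S hS
  obtain ⟨R, hR, -, hRS'⟩ := hg.image S' hS'
  refine ⟨R, hR, hctf.subset_of_branches_subset hR ?_, ?_⟩
  · rw [hRS', hTS]
    exact image_mono (branches_mono hS'S)
  · rw [hRS', ← image_inter hg.injective, hZS', image_empty]

end IsBranchCopy

namespace CombTreeForcing

variable {𝕋 : Set (Set (List ℕ))} (hctf : CombTreeForcing 𝕋)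
include hctf

theorem mem_treeIdeal_of_mk_lt {P : Set (ℕ → ℕ)} (hP : #P < 𝔠) : P ∈ treeIdeal 𝕋 := by
  intro T hT
  obtain ⟨g, hg⟩ := hctf.exists_isBranchCopy hT
  obtain ⟨f, -, hf⟩ := hctf.large_disjoint
  by_contra! hmeet
  -- otherwise `P` meets each of the `𝔠` disjoint copies below `T` of the fibres of `f`
  have hfib : ∀ b : ℕ → Bool, ∃ x, f x = b ∧ g x ∈ P := by
    intro b
    obtain ⟨F, hF, hfF⟩ := hf b
    obtain ⟨R, hR, hRT, hRF⟩ := hg.image F hF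
    obtain ⟨_, hyP, hyR⟩ := hmeet R hR hRT
    rw [hRF, ← hfF] at hyR
    obtain ⟨x, hx, rfl⟩ := hyR
    exact ⟨x, hx, hyP⟩
  choose x hx hxP using hfib
  have hinj : Injective fun b => (⟨g (x b), hxP b⟩ : P) := fun b b' hbb' => by
    rw [← hx b, ← hx b', hg.injective (congrArg Subtype.val hbb')]
  exact hP.not_ge (by simpa using mk_le_of_injective hinj)

theorem one_lt_idealCof : 1 < idealCof (treeIdeal 𝕋) := by
  obtain ⟨J, hJ, hJcard, hJcof⟩ := exists_mk_eq_idealCof (treeIdeal 𝕋)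
  by_contra! hle
  have hcover : ∀ x, ∃ Y ∈ J, x ∈ Y := fun x =>
    let ⟨Y, hY, hxY⟩ := hJcof {x} (hctf.mem_treeIdeal_of_mk_lt (by simpa using nat_lt_continuum 1))
    ⟨Y, hY, hxY rfl⟩
  obtain ⟨Y, hY, -⟩ := hcover fun _ => 0
  have huniv : Set.univ ∈ treeIdeal 𝕋 := mem_treeIdeal_of_subset (fun x _ => by
    obtain ⟨Y', hY', hxY'⟩ := hcover x
    rwa [mk_le_one_iff_set_subsingleton.1 (hJcard ▸ hle) hY' hY] at hxY') (hJ hY)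
  obtain ⟨S, hS, -, hSempty⟩ := huniv _ hctf.univ_mem
  rw [univ_inter] at hSempty
  exact (hctf.branches_nonempty hS).ne_empty hSempty

theorem exists_mem_treeIdealBelow_forall_not_subset {A : Set (List ℕ)} (hA : A ∈ 𝕋)
    {F : Set (Set (ℕ → ℕ))} (hF : F ⊆ treeIdeal 𝕋) (hFcard : #F < idealCof (treeIdeal 𝕋))
    {P : Set (ℕ → ℕ)} (hP : #P < 𝔠) :
    ∃ X ⊆ branches A, X ∩ P = ∅ ∧ X ∈ treeIdealBelow 𝕋 A ∧ ∀ Y ∈ F, ¬X ⊆ Y := by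
  obtain ⟨g, hg⟩ := hctf.exists_isBranchCopy hA
  by_contra! hcov
  -- otherwise the sets `g⁻¹(Y ∪ P)`, `Y ∈ F`, would be cofinal in `t⁰`
  refine hFcard.not_ge ((idealCof_le (J := (fun Y => g ⁻¹' (Y ∪ P)) '' F) ?_ fun Z hZ => ?_).trans
    mk_image_le)
  · rintro _ ⟨Y, hY, rfl⟩
    exact hg.preimage_mem_treeIdeal hctf
      (union_mem_treeIdeal (hF hY) (hctf.mem_treeIdeal_of_mk_lt hP))
  · obtain ⟨Y, hY, hZY⟩ := hcov (g '' Z \ P)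
      (sdiff_subset.trans ((image_subset_range g Z).trans (hg.range_subset hctf)))
      sdiff_inter_self
      (mem_treeIdealBelow_of_subset sdiff_subset (hg.image_mem_treeIdealBelow hctf hZ))
    refine ⟨_, mem_image_of_mem _ hY, fun z hz => ?_⟩
    by_cases hzP : g z ∈ P
    exacts [Or.inr hzP, Or.inl (hZY ⟨mem_image_of_mem g hz, hzP⟩)]

end CombTreeForcing

theorem mk_biUnion_le_of_subsingleton {ι α : Type u} {A : ι → Set α} {s : Set ι}
    (h : ∀ i ∈ s, (A i).Subsingleton) : #(⋃ i ∈ s, A i) ≤ #s :=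
  calc #(⋃ i ∈ s, A i) ≤ #s * ⨆ i : s, #(A i) := mk_biUnion_le A s
    _ ≤ #s * 1 := by
      gcongr
      exact ciSup_le' fun i => mk_le_one_iff_set_subsingleton.2 (h i i.2)
    _ = #s := mul_one _

theorem exists_cover_mk_lt_of_cof_le {α K : Type u} {J : Set α} (hJ : 1 < #J) (hK : ℵ₀ ≤ #K)
    (hcof : (#J).ord.cof ≤ #K) :
    ∃ D : K → Set α, (∀ δ, D δ ⊆ J) ∧ (∀ δ, #(D δ) < #J) ∧ J ⊆ ⋃ δ, D δ := by
  rcases le_or_gt #J #K with hle | hlt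
  · obtain ⟨e⟩ := (le_def _ _).1 hle
    refine ⟨fun δ => Subtype.val '' (e ⁻¹' {δ}), fun δ => image_subset_iff.2 fun Y _ => Y.2,
      fun δ => mk_image_le.trans_lt ((mk_le_one_iff_set_subsingleton.2 ?_).trans_lt hJ),
      fun Y hY => mem_iUnion.2 ⟨e ⟨Y, hY⟩, ⟨Y, hY⟩, rfl, rfl⟩⟩
    exact fun Y hY Y' hY' => e.injective (hY.trans hY'.symm)
  · have hJinf : ℵ₀ ≤ #J := hK.trans hlt.le
    obtain ⟨e⟩ := Cardinal.eq.1 (mk_ord_toType #J).symm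
    obtain ⟨S, hS, hScard⟩ := Order.exists_cof_eq (#J).ord.ToType
    rw [Ordinal.cof_toType] at hScard
    obtain ⟨f⟩ := (le_def _ _).1 (hScard.trans_le hcof)
    obtain ⟨Y₀⟩ := mk_ne_zero_iff.1 (zero_lt_one.trans hJ).ne'
    obtain ⟨b₀, hb₀, -⟩ := hS (e Y₀)
    have : Nonempty S := ⟨⟨b₀, hb₀⟩⟩
    -- cut `J`, well-ordered in type `#J`, at the points of a cofinal set of size `≤ #K`
    refine ⟨fun δ => Subtype.val '' (e ⁻¹' Iic (invFun f δ).1),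
      fun δ => image_subset_iff.2 fun Y _ => Y.2,
      fun δ => ?_, fun Y hY => ?_⟩
    · refine mk_image_le.trans_lt ((mk_preimage_of_injective _ _ e.injective).trans_lt ?_)
      simpa using mk_Iic_lt (invFun f δ).1 (by simp) (by simpa using hJinf)
    · obtain ⟨b, hb, hYb⟩ := hS (e ⟨Y, hY⟩)
      obtain ⟨δ, hδ⟩ := invFun_surjective f.injective ⟨b, hb⟩
      exact mem_iUnion.2 ⟨δ, ⟨Y, hY⟩, by simpa [hδ] using hYb, rfl⟩

structure IsSelectiveDisjointFamily (𝕋 : Set (Set (List ℕ))) {K : Type} (T : K → Set (List ℕ)) :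
    Prop where
  mem : ∀ δ, T δ ∈ 𝕋
  pairwise_disjoint : Pairwise (Disjoint on fun δ => branches (T δ))
  selective : ∀ R ∈ 𝕋, ∃ S ∈ 𝕋, S ⊆ R ∧
    ((∃ δ, S ⊆ T δ) ∨ ∀ δ, (branches S ∩ branches (T δ)).Subsingleton)

theorem SelectiveDisjointAntichainProp.exists_isSelectiveDisjointFamily
    {𝕋 : Set (Set (List ℕ))} (h : SelectiveDisjointAntichainProp 𝕋) {K : Type} (hK : #K = 𝔠) :
    ∃ T : K → Set (List ℕ), IsSelectiveDisjointFamily 𝕋 T := by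
  obtain ⟨ι, T, hι, hmem, -, hdisj, hsel⟩ := h
  obtain ⟨e⟩ := Cardinal.eq.1 (hK.trans hι.symm)
  refine ⟨T ∘ e, fun δ => hmem (e δ),
    fun δ δ' hne => disjoint_iff_inter_eq_empty.2 (hdisj _ _ (e.injective.ne hne)), fun R hR => ?_⟩
  obtain ⟨S, hS, hSR, ⟨a, hSa⟩ | hthin⟩ := hsel R hR
  exacts [⟨S, hS, hSR, Or.inl ⟨e.symm a, by simpa using hSa⟩⟩,
    ⟨S, hS, hSR, Or.inr fun δ => hthin (e δ)⟩]

theorem iUnion_inter_branches_eq_of_subset {K : Type} {T : K → Set (List ℕ)}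
    (hT : Pairwise (Disjoint on fun δ => branches (T δ))) {X : K → Set (ℕ → ℕ)}
    (hX : ∀ δ, X δ ⊆ branches (T δ)) {S : Set (List ℕ)} {b : K} (hS : S ⊆ T b) :
    (⋃ δ, X δ) ∩ branches S = X b ∩ branches S := by
  refine Subset.antisymm (fun x ⟨hx, hxS⟩ => ⟨?_, hxS⟩)
    (inter_subset_inter_left _ (subset_iUnion X b))
  obtain ⟨δ, hxδ⟩ := mem_iUnion.1 hx
  obtain rfl : δ = b := by_contra fun hne =>
    disjoint_left.1 (hT hne) (hX δ hxδ) (branches_mono hS hxS)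
  exact hxδ

theorem CombTreeForcing.exists_mem_treeIdeal_forall_not_subset {𝕋 : Set (Set (List ℕ))}
    (hctf : CombTreeForcing 𝕋) {K : Type} [LinearOrder K] (hK : ∀ δ : K, #(Iic δ) < 𝔠)
    (hKc : 𝔠 ≤ #K) {T : K → Set (List ℕ)} (hT : IsSelectiveDisjointFamily 𝕋 T)
    {D : K → Set (Set (ℕ → ℕ))} (hD : ∀ δ, D δ ⊆ treeIdeal 𝕋)
    (hDcard : ∀ δ, #(D δ) < idealCof (treeIdeal 𝕋)) :
    ∃ X ∈ treeIdeal 𝕋, ∀ δ, ∀ Y ∈ D δ, ¬X ⊆ Y := by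
  obtain ⟨ε⟩ : Nonempty (Set (List ℕ) ↪ K) := (le_def _ _).1 (by simpa [mk_set] using hKc)
  let thin : Set (Set (List ℕ)) := {S | ∀ δ, (branches S ∩ branches (T δ)).Subsingleton}
  let P β := ⋃ S ∈ thin ∩ ε ⁻¹' Iio β, branches S ∩ branches (T β)
  have hP β : #(P β) < 𝔠 :=
    calc #(P β) ≤ #↥(thin ∩ ε ⁻¹' Iio β) := mk_biUnion_le_of_subsingleton fun S hS => hS.1 β
      _ ≤ #(Iic β) := (mk_le_mk_of_subset inter_subset_right).trans
        ((mk_preimage_of_injective _ _ ε.injective).trans (mk_le_mk_of_subset Iio_subset_Iic_self))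
      _ < 𝔠 := hK β
  choose X hXT hXP hXbelow hXD using fun β =>
    hctf.exists_mem_treeIdealBelow_forall_not_subset (hT.mem β) (hD β) (hDcard β) (hP β)
  refine ⟨⋃ β, X β, fun R hR => ?_, fun δ Y hY hXY => hXD δ Y hY ((subset_iUnion X δ).trans hXY)⟩
  obtain ⟨S, hS, hSR, ⟨b, hSb⟩ | hthin⟩ := hT.selective R hR
  · obtain ⟨R', hR', hR'S, hXR'⟩ := hXbelow b S hS hSb
    refine ⟨R', hR', hR'S.trans hSR, ?_⟩
    rw [iUnion_inter_branches_eq_of_subset hT.pairwise_disjoint hXT (hR'S.trans hSb), hXR']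
  · -- `S` meets each `X β` in at most one point, and misses it once `ε S < β`
    have hXS : (⋃ β, X β) ∩ branches S ⊆ ⋃ β ∈ Iic (ε S), X β ∩ branches S := by
      rintro x ⟨hx, hxS⟩
      obtain ⟨β, hxβ⟩ := mem_iUnion.1 hx
      refine mem_biUnion (not_lt.1 fun hlt => ?_) ⟨hxβ, hxS⟩
      exact (hXP β).subset ⟨hxβ, mem_biUnion ⟨hthin, hlt⟩ ⟨hxS, hXT β hxβ⟩⟩
    have hcard : #↥((⋃ β, X β) ∩ branches S) < 𝔠 :=
      (mk_le_mk_of_subset hXS).trans_lt ((mk_biUnion_le_of_subsingleton fun β _ =>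
        (hthin β).anti fun x hx => ⟨hx.2, hXT β hx.1⟩).trans_lt (hK _))
    obtain ⟨R', hR', hR'S, hXR'⟩ := hctf.mem_treeIdeal_of_mk_lt hcard S hS
    refine ⟨R', hR', hR'S.trans hSR, ?_⟩
    rwa [inter_assoc, inter_eq_right.2 (branches_mono hR'S)] at hXR'

/-- If a combinatorial tree forcing `𝕋` has the selective disjoint antichain property, then
`cf(cof(t⁰)) > 𝔠 = 2^{ℵ₀}`. -/
theorem cof_treeIdeal_of_selectiveDisjointAntichain (𝕋 : Set (Set (List ℕ)))
    (hctf : CombTreeForcing 𝕋) (hsdap : SelectiveDisjointAntichainProp 𝕋) :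
    Cardinal.continuum < (idealCof (treeIdeal 𝕋)).ord.cof := by
  obtain ⟨J, hJ, hJcard, hJcof⟩ := exists_mk_eq_idealCof (treeIdeal 𝕋)
  by_contra! hcf
  let K := (𝔠 : Cardinal).ord.ToType
  have hK : #K = 𝔠 := mk_ord_toType 𝔠
  obtain ⟨D, hDJ, hDcard, hJD⟩ := exists_cover_mk_lt_of_cof_le (K := K)
    (hJcard ▸ hctf.one_lt_idealCof) (hK ▸ aleph0_le_continuum) (by rwa [hJcard, hK])
  obtain ⟨T, hT⟩ := hsdap.exists_isSelectiveDisjointFamily hK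
  obtain ⟨X, hX, hXD⟩ := hctf.exists_mem_treeIdeal_forall_not_subset
    (fun δ => by simpa [hK] using mk_Iic_lt δ (by simp [K]) (hK ▸ aleph0_le_continuum)) hK.ge hT
    (fun δ => (hDJ δ).trans hJ) (fun δ => hJcard ▸ hDcard δ)
  obtain ⟨Y, hYJ, hXY⟩ := hJcof X hX
  obtain ⟨δ, hYδ⟩ := mem_iUnion.1 (hJD hYJ)
  exact hXD δ Y hYδ hXY
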